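/- Under the hypotheses of Theorem 3 (in particular |4sin²(πhi/2)/h² − k²| ≥ k²δ₀ for all i, with 0 < h < 1/2), the GMRES residuals for the 2r-th order scheme preconditioned by the second-order matrix satisfy ‖r_n‖₂ ≤ ((2τ²/δ₀)·∑_{l=0}^{r−2} k^{2l}/(4^l(2(l+2))!))^n ‖r₀‖₂, where τ = kh. -/

import Mathlib

open Real Finset Matrix

lemma cos_sum_telescope (θ : ℝ) (M : ℕ) :
    2 * Real.sin (θ/2) * ∑ j ∈ Finset.range M, Real.cos (θ * (j+1)) =
    Real.sin (θ * M + θ/2) - Real.sin (θ/2) := by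
  rw [Finset.mul_sum]
  have : ∀ j ∈ Finset.range M, 2 * Real.sin (θ/2) * Real.cos (θ*(j+1))
      = Real.sin (θ*((j:ℕ)+1 : ℕ) + θ/2) - Real.sin (θ*j + θ/2) := by
    intro j _
    rw [Real.sin_sub_sin]
    push_cast
    ring_nf
  rw [Finset.sum_congr rfl this, Finset.sum_range_sub (fun j => Real.sin (θ*j + θ/2))]
  simp

lemma cos_sum_eval (N p : ℕ) (hp : 0 < p) (hp2 : p < 2*(N+1)) :
    ∑ j ∈ Finset.range N, Real.cos ((p*π/(N+1)) * (j+1)) = if Even p then (-1:ℝ) else 0 := by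
  set θ : ℝ := p*π/(N+1) with hθ
  have hN1 : (0:ℝ) < (N:ℝ) + 1 := by positivity
  have hθpos : 0 < θ/2 := by
    rw [hθ]
    have : (0:ℝ) < p := by exact_mod_cast hp
    positivity
  have hθlt : θ/2 < π := by
    rw [hθ, div_lt_iff₀ (by norm_num : (0:ℝ) < 2)]
    rw [div_lt_iff₀ hN1]
    have : (p:ℝ) < 2*((N:ℝ)+1) := by exact_mod_cast hp2
    calc (p:ℝ)*π = π * p := by ring
    _ < π * (2*((N:ℝ)+1)) := by
        apply mul_lt_mul_of_pos_left this Real.pi_pos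
    _ = π * 2 * ((N:ℝ)+1) := by ring
  have hs : Real.sin (θ/2) ≠ 0 := ne_of_gt (Real.sin_pos_of_pos_of_lt_pi hθpos hθlt)
  have key := cos_sum_telescope θ N
  have h1 : θ * N + θ/2 = (p:ℕ)*π - θ/2 := by
    have hθN : θ * ((N:ℝ)+1) = p*π := by rw [hθ, div_mul_cancel₀ _ hN1.ne']
    linear_combination hθN
  rw [h1, Real.sin_nat_mul_pi_sub] at key
  -- key : 2 * sin(θ/2) * S = -((-1)^p * sin (θ/2)) - sin (θ/2)
  rcases Nat.even_or_odd p with he | ho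
  · rw [if_pos he]
    have : ((-1:ℝ))^p = 1 := he.neg_one_pow
    rw [this] at key
    have h2 : 2 * Real.sin (θ/2) ≠ 0 := by positivity
    have : 2 * Real.sin (θ/2) * (∑ j ∈ Finset.range N, Real.cos (θ * (j+1))) = 2 * Real.sin (θ/2) * (-1) := by linarith
    exact mul_left_cancel₀ h2 this
  · rw [if_neg (Nat.not_even_iff_odd.mpr ho)]
    have : ((-1:ℝ))^p = -1 := ho.neg_one_pow
    rw [this] at key
    have h2 : 2 * Real.sin (θ/2) ≠ 0 := by positivity
    have key2 : 2 * Real.sin (θ/2) * (∑ j ∈ Finset.range N, Real.cos (θ * (j+1))) = 0 := by linarith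
    exact (mul_eq_zero.mp key2).resolve_left h2

lemma sum_cos_int (N : ℕ) (p : ℤ) (hp : p ≠ 0) (hp2 : p.natAbs < 2*(N+1)) :
    ∑ j ∈ Finset.range N, Real.cos (((p:ℝ)*π/(N+1)) * (j+1)) = if Even p then (-1:ℝ) else 0 := by
  have habs : ∀ j : ℕ, Real.cos (((p:ℝ)*π/(N+1)) * (j+1))
      = Real.cos (((p.natAbs:ℝ)*π/(N+1)) * (j+1)) := by
    intro j
    have h1 : ((p.natAbs : ℝ)) = |(p:ℝ)| := by
      rw [Nat.cast_natAbs, Int.cast_abs]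
    rcases le_or_gt 0 p with hp0 | hp0
    · rw [h1, abs_of_nonneg (by exact_mod_cast hp0)]
    · rw [h1, abs_of_neg (by exact_mod_cast hp0)]
      rw [show -(p:ℝ)*π/(N+1)*(j+1) = -((p:ℝ)*π/(N+1)*(j+1)) by ring, Real.cos_neg]
  simp_rw [habs]
  rw [cos_sum_eval N p.natAbs (by omega) hp2]
  congr 1
  simp [Int.natAbs_even]

lemma sine_orth (N : ℕ) (m l : Fin N) :
    ∑ i ∈ Finset.range N, Real.sin (π/(N+1)*(m.val+1)*(i+1)) * Real.sin (π/(N+1)*(l.val+1)*(i+1))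
      = if m = l then ((N:ℝ)+1)/2 else 0 := by
  have key : ∀ i ∈ Finset.range N,
      Real.sin (π/(N+1)*(m.val+1)*(i+1)) * Real.sin (π/(N+1)*(l.val+1)*(i+1))
      = (Real.cos ((((m.val:ℝ)-(l.val:ℝ))*π/(N+1))*(i+1))
        - Real.cos ((((m.val:ℝ)+(l.val:ℝ)+2)*π/(N+1))*(i+1)))/2 := by
    intro i _
    rw [show ((((m.val:ℝ)-(l.val:ℝ))*π/(N+1))*(i+1) : ℝ)
        = (π/(N+1)*(m.val+1)*(i+1)) - (π/(N+1)*(l.val+1)*(i+1)) by push_cast; ring,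
      show ((((m.val:ℝ)+(l.val:ℝ)+2)*π/(N+1))*(i+1) : ℝ)
        = (π/(N+1)*(m.val+1)*(i+1)) + (π/(N+1)*(l.val+1)*(i+1)) by push_cast; ring,
      Real.cos_sub, Real.cos_add]
    ring
  rw [Finset.sum_congr rfl key, ← Finset.sum_div, Finset.sum_sub_distrib]
  have h2 : ∑ j ∈ Finset.range N, Real.cos ((((m.val+l.val+2:ℕ):ℝ)*π/(N+1)) * (j+1))
      = if Even (m.val+l.val+2) then (-1:ℝ) else 0 :=
    cos_sum_eval N (m.val+l.val+2) (by omega) (by have := m.isLt; have := l.isLt; omega)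
  push_cast at h2
  by_cases hml : m = l
  · subst hml
    rw [if_pos rfl]
    have h1 : ∀ j ∈ Finset.range N,
        Real.cos ((((m.val:ℝ)-(m.val:ℝ))*π/(N+1)) * (j+1)) = 1 := by
      intro j _; norm_num
    rw [Finset.sum_congr rfl h1, h2, Finset.sum_const, Finset.card_range]
    have hev : Even (m.val+m.val+2) := ⟨m.val+1, by omega⟩
    rw [if_pos hev]
    push_cast
    ring
  · rw [if_neg hml]
    have hne : (m.val:ℤ) - (l.val:ℤ) ≠ 0 := by
      have : m.val ≠ l.val := fun hc => hml (Fin.ext hc)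
      omega
    have h1 := sum_cos_int N ((m.val:ℤ)-(l.val:ℤ)) hne
      (by have := m.isLt; have := l.isLt; omega)
    push_cast at h1
    rw [h1, h2]
    have hpar : Even ((m.val:ℤ)-(l.val:ℤ)) ↔ Even (m.val+l.val+2) := by
      rw [Int.even_iff, Nat.even_iff]; omega
    by_cases hE : Even ((m.val:ℤ)-(l.val:ℤ))
    · rw [if_pos hE, if_pos (hpar.mp hE)]; ring
    · rw [if_neg hE, if_neg (fun hc => hE (hpar.mpr hc))]; ring

lemma lam_eig (N : ℕ) (Λ : Matrix (Fin N) (Fin N) ℝ)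
    (hΛ : ∀ i j : Fin N, Λ i j = if i.val + 1 = j.val ∨ j.val + 1 = i.val then 1 else 0)
    (m i : Fin N) :
    Λ.mulVec (fun j => Real.sin (π/(N+1)*(m.val+1)*(j.val+1))) i
      = 2*Real.cos (π/(N+1)*(m.val+1)) * Real.sin (π/(N+1)*(m.val+1)*(i.val+1)) := by
  set c : ℝ := π/(N+1)*(m.val+1) with hc
  set v : Fin N → ℝ := fun j => Real.sin (c*(j.val+1)) with hv
  have hmul : Λ.mulVec v i = ∑ j : Fin N, Λ i j * v j := rfl
  have hsplit : ∑ j : Fin N, Λ i j * v j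
      = (∑ j : Fin N, (if i.val+1 = j.val then (1:ℝ) else 0) * v j)
      + (∑ j : Fin N, (if j.val+1 = i.val then (1:ℝ) else 0) * v j) := by
    rw [← Finset.sum_add_distrib]
    apply Finset.sum_congr rfl
    intro j _
    rw [hΛ]
    by_cases h1 : i.val+1 = j.val <;> by_cases h2 : j.val+1 = i.val
    · omega
    · simp [h1, h2]
    · simp [h1, h2]
    · simp [h1, h2]
  have hS1 : ∑ j : Fin N, (if i.val+1 = j.val then (1:ℝ) else 0) * v j
      = Real.sin (c*((i.val:ℝ)+2)) := by
    by_cases hi : i.val + 1 < N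
    · rw [Finset.sum_eq_single (⟨i.val+1, hi⟩ : Fin N)]
      · simp only [hv, if_pos rfl, one_mul]
        congr 1
        push_cast
        ring
      · intro b _ hb
        have : ¬(i.val+1 = b.val) := fun hcc => hb (Fin.ext hcc.symm)
        simp [this]
      · intro hmem; exact absurd (Finset.mem_univ _) hmem
    · have hiN : i.val + 1 = N := by have := i.isLt; omega
      rw [Finset.sum_eq_zero]
      · have h2 : c*((i.val:ℝ)+2) = ((m.val+1:ℕ):ℝ)*π := by
          have h3 : ((i.val:ℝ)+2) = (N:ℝ)+1 := by
            have : ((i.val:ℝ)+1) = (N:ℝ) := by exact_mod_cast hiN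
            linarith
          rw [h3, hc]
          have hN0 : (N:ℝ)+1 ≠ 0 := by positivity
          field_simp
          push_cast
          ring
        rw [h2, Real.sin_nat_mul_pi]
      · intro j _
        have : ¬(i.val+1 = j.val) := by have := j.isLt; omega
        simp [this]
  have hS2 : ∑ j : Fin N, (if j.val+1 = i.val then (1:ℝ) else 0) * v j
      = Real.sin (c*(i.val:ℝ)) := by
    by_cases hi : 0 < i.val
    · rw [Finset.sum_eq_single (⟨i.val-1, by have := i.isLt; omega⟩ : Fin N)]
      · simp only [hv, if_pos (by omega : (i.val-1)+1 = i.val), one_mul]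
        congr 1
        have : ((i.val-1:ℕ):ℝ) = (i.val:ℝ)-1 := by
          have : (1:ℕ) ≤ i.val := hi
          push_cast [Nat.cast_sub this]
          ring
        rw [this]
        ring
      · intro b _ hb
        by_cases hbv : b.val + 1 = i.val
        · exfalso
          apply hb
          apply Fin.ext
          simp only [Fin.val_mk]
          omega
        · simp [hbv]
      · intro hmem; exact absurd (Finset.mem_univ _) hmem
    · have hi0 : i.val = 0 := by omega
      rw [Finset.sum_eq_zero, hi0]
      · norm_num
      · intro j _
        have : ¬(j.val+1 = i.val) := by omega
        simp [this]
  rw [hmul, hsplit, hS1, hS2,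
    show c*(i.val:ℝ) = c*((i.val:ℝ)+1) - c by ring,
    show c*((i.val:ℝ)+2) = c*((i.val:ℝ)+1) + c by ring,
    Real.sin_sub, Real.sin_add]
  ring


lemma conj_pow' {N : ℕ} (P Q X : Matrix (Fin N) (Fin N) ℝ)
    (hPQ : P * Q = 1) (hQP : Q * P = 1) (n : ℕ) :
    (P * X * Q)^n = P * X^n * Q := by
  induction n with
  | zero => simpa using hPQ.symm
  | succ n ih =>
    rw [pow_succ, pow_succ, ih]
    have h1 : P * X ^ n * Q * (P * X * Q) = P * (X ^ n * (Q * P) * X) * Q := by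
      noncomm_ring
    rw [h1, hQP]
    noncomm_ring

lemma euclid_norm_symm {N : ℕ} (w : Fin N → ℝ) :
    ‖(WithLp.equiv 2 (Fin N → ℝ)).symm w‖ = Real.sqrt (∑ i, (w i)^2) := by
  rw [EuclideanSpace.norm_eq]
  congr 1
  apply Finset.sum_congr rfl
  intro i _
  rw [Real.norm_eq_abs, sq_abs]
  rfl

lemma sumsq_mulVec {N : ℕ} (R : Matrix (Fin N) (Fin N) ℝ) (s : ℝ)
    (hR : Rᵀ * R = s • (1 : Matrix (Fin N) (Fin N) ℝ)) (w : Fin N → ℝ) :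
    ∑ i, ((R.mulVec w) i)^2 = s * ∑ i, (w i)^2 := by
  have h1 : ∑ i, ((R.mulVec w) i)^2 = (R.mulVec w) ⬝ᵥ (R.mulVec w) := by
    simp [dotProduct, sq]
  have h2 : ∑ i, (w i)^2 = w ⬝ᵥ w := by
    simp [dotProduct, sq]
  rw [h1, h2, Matrix.dotProduct_mulVec]
  rw [show (R.mulVec w) ᵥ* R = Rᵀ.mulVec (R.mulVec w) from (Matrix.mulVec_transpose R _).symm]
  rw [Matrix.mulVec_mulVec, hR, Matrix.smul_mulVec, Matrix.one_mulVec,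
    smul_dotProduct, smul_eq_mul]

/-- GMRES convergence estimate for the 2r-th order scheme with the
second-order preconditioner. GMRES minimizes `‖p(AA_p⁻¹) r₀‖₂` over polynomials of
degree ≤ n with `p(0) = 1`, so the residual bound is expressed via such a polynomial. -/
theorem gmres_convergence_high_order (N : ℕ) (hN : 1 ≤ N)
    (h : ℝ) (hh : h = 1 / (N + 1)) (hh2 : 0 < h ∧ h < 1 / 2)
    (k : ℝ) (hk : 0 < k) (τ : ℝ) (hτ : τ = k * h)
    (r : ℕ) (hr : 2 ≤ r) (δ₀ : ℝ) (hδ₀ : 0 < δ₀)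
    (hbound : ∀ i : Fin N,
      |4 * Real.sin (π * h * (i.val + 1) / 2) ^ 2 / h ^ 2 - k ^ 2| ≥ k ^ 2 * δ₀)
    (Λ : Matrix (Fin N) (Fin N) ℝ)
    (hΛ : ∀ i j : Fin N,
      Λ i j = if i.val + 1 = j.val ∨ j.val + 1 = i.val then 1 else 0)
    (d : ℕ → ℝ)
    (hd : ∀ s : ℕ, d s = ∑ j ∈ Finset.range (s + 1),
      (-1 : ℝ) ^ j * τ ^ (2 * j) / (Nat.factorial (2 * j)))
    (A Ap : Matrix (Fin N) (Fin N) ℝ)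
    (hA : A = Λ - (2 * d r) • (1 : Matrix (Fin N) (Fin N) ℝ))
    (hAp : Ap = Λ - (2 * d 1) • (1 : Matrix (Fin N) (Fin N) ℝ))
    (n : ℕ) (r₀ : EuclideanSpace ℝ (Fin N)) :
    ∃ p : Polynomial ℝ, p.natDegree ≤ n ∧ p.eval 0 = 1 ∧
      ‖Matrix.toEuclideanCLM (𝕜 := ℝ) ((Polynomial.aeval (A * Ap⁻¹)) p) r₀‖ ≤
        ((2 * τ ^ 2 / δ₀) *
          ∑ l ∈ Finset.range (r - 1), k ^ (2 * l) / (4 ^ l * (Nat.factorial (2 * (l + 2))))) ^ n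
        * ‖r₀‖ := by
  set C : ℝ := (2 * τ ^ 2 / δ₀) *
      ∑ l ∈ Finset.range (r - 1), k ^ (2 * l) / (4 ^ l * (Nat.factorial (2 * (l + 2)))) with hCdef
  obtain ⟨hh0, hhalf⟩ := hh2
  have hN1 : (0:ℝ) < (N:ℝ)+1 := by positivity
  have hπh : π/((N:ℝ)+1) = π * h := by rw [hh]; ring
  -- eigen data
  obtain ⟨c, hc⟩ : ∃ c : Fin N → ℝ, ∀ m, c m = 2*Real.cos (π/((N:ℝ)+1)*(m.val+1)) :=
    ⟨_, fun m => rfl⟩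
  obtain ⟨μ, hμ⟩ : ∃ μ : Fin N → ℝ, ∀ m, μ m = c m - 2*(d 1) := ⟨_, fun m => rfl⟩
  obtain ⟨P, hP⟩ : ∃ P : Matrix (Fin N) (Fin N) ℝ,
      ∀ i m, P i m = Real.sin (π/((N:ℝ)+1)*(m.val+1)*(i.val+1)) :=
    ⟨Matrix.of fun i m => Real.sin (π/((N:ℝ)+1)*(m.val+1)*(i.val+1)), fun i m => rfl⟩
  set Q : Matrix (Fin N) (Fin N) ℝ := (2/((N:ℝ)+1)) • Pᵀ with hQdef
  -- orthogonality
  have hPtP : Pᵀ * P = (((N:ℝ)+1)/2) • (1 : Matrix (Fin N) (Fin N) ℝ) := by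
    ext m l
    rw [Matrix.mul_apply]
    have h1 : ∀ i : Fin N, Pᵀ m i * P i l
        = Real.sin (π/((N:ℝ)+1)*(m.val+1)*(i.val+1)) * Real.sin (π/((N:ℝ)+1)*(l.val+1)*(i.val+1)) := by
      intro i; rw [Matrix.transpose_apply, hP, hP]
    rw [Finset.sum_congr rfl (fun i _ => h1 i)]
    rw [Fin.sum_univ_eq_sum_range
      (fun i => Real.sin (π/((N:ℝ)+1)*(m.val+1)*(i+1)) * Real.sin (π/((N:ℝ)+1)*(l.val+1)*(i+1))) N]
    rw [sine_orth N m l]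
    by_cases hml : m = l
    · simp [hml, Matrix.one_apply]
    · simp [hml, Matrix.one_apply_ne hml]
  have hQP : Q * P = 1 := by
    rw [hQdef, Matrix.smul_mul, hPtP, smul_smul,
      show (2/((N:ℝ)+1)) * (((N:ℝ)+1)/2) = 1 by field_simp, one_smul]
  have hPQ : P * Q = 1 := mul_eq_one_comm.mpr hQP
  -- diagonalization of Λ
  have hΛP : Λ * P = P * diagonal c := by
    ext i m
    rw [Matrix.mul_apply, Matrix.mul_diagonal]
    have h1 : (∑ j, Λ i j * P j m)
        = Λ.mulVec (fun j => Real.sin (π/((N:ℝ)+1)*(m.val+1)*(j.val+1))) i := by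
      rw [Matrix.mulVec, dotProduct]
      exact Finset.sum_congr rfl fun j _ => by rw [hP]
    rw [h1, lam_eig N Λ hΛ m i, hP, hc]
    ring
  have hΛdec : Λ = P * diagonal c * Q := by
    calc Λ = Λ * (P * Q) := by rw [hPQ, Matrix.mul_one]
    _ = (Λ * P) * Q := by rw [Matrix.mul_assoc]
    _ = P * diagonal c * Q := by rw [hΛP]
  have hsmul1 : ∀ s : ℝ, s • (1 : Matrix (Fin N) (Fin N) ℝ)
      = P * diagonal (fun _ => s) * Q := by
    intro s
    calc s • (1 : Matrix (Fin N) (Fin N) ℝ) = s • (P * Q) := by rw [hPQ]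
    _ = (s • P) * Q := by rw [Matrix.smul_mul]
    _ = (P * diagonal (fun _ => s)) * Q := by
        congr 1
        ext i j
        rw [Matrix.smul_apply, Matrix.mul_diagonal, smul_eq_mul, mul_comm]
  have hApdec : Ap = P * diagonal μ * Q := by
    rw [hAp, hΛdec, hsmul1 (2 * d 1), ← Matrix.sub_mul, ← Matrix.mul_sub,
      Matrix.diagonal_sub,
      show (fun i => c i - 2 * d 1) = μ from funext fun m => (hμ m).symm]
  have hAdec : A = P * diagonal (fun m => c m - 2*(d r)) * Q := by
    rw [hA, hΛdec, hsmul1 (2 * d r), ← Matrix.sub_mul, ← Matrix.mul_sub,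
      Matrix.diagonal_sub]
  -- d 1 value
  have hd1 : d 1 = 1 - τ^2/2 := by
    rw [hd]
    rw [Finset.sum_range_succ, Finset.sum_range_succ, Finset.sum_range_zero]
    norm_num [Nat.factorial]
    ring
  -- lower bound on |μ m|
  have hμabs : ∀ m : Fin N, h^2*(k^2*δ₀) ≤ |μ m| := by
    intro m
    have hb := hbound m
    have hcos : Real.cos (π * h * (m.val+1)) = 1 - 2*Real.sin (π * h * (m.val+1)/2)^2 := by
      have h2 : Real.cos (2*((π * h * (m.val+1))/2)) = 2*Real.cos ((π * h * (m.val+1))/2)^2 - 1 :=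
        Real.cos_two_mul _
      rw [show 2*((π * h * (m.val+1))/2) = π * h * (m.val+1) by ring] at h2
      have h3 := Real.sin_sq_add_cos_sq ((π * h * (m.val+1))/2)
      linarith
    have hμm : μ m = -(h^2*(4*Real.sin (π * h * (m.val+1)/2)^2/h^2 - k^2)) := by
      rw [hμ, hc, hπh, hcos, hd1, hτ]
      field_simp
      ring
    rw [hμm, abs_neg, abs_mul, abs_of_nonneg (sq_nonneg h)]
    exact mul_le_mul_of_nonneg_left hb (sq_nonneg h)
  have hμpos : ∀ m, (0:ℝ) < |μ m| := fun m => lt_of_lt_of_le (by positivity) (hμabs m)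
  have hμne : ∀ m, μ m ≠ 0 := fun m => by
    intro hz
    have := hμpos m
    rw [hz] at this
    simp at this
  -- inverse of Ap
  have hApinv : Ap⁻¹ = P * diagonal (fun m => (μ m)⁻¹) * Q := by
    apply Matrix.inv_eq_right_inv
    rw [hApdec]
    calc (P * diagonal μ * Q) * (P * diagonal (fun m => (μ m)⁻¹) * Q)
        = P * (diagonal μ * (Q * P) * diagonal (fun m => (μ m)⁻¹)) * Q := by
          noncomm_ring
      _ = P * (diagonal μ * diagonal (fun m => (μ m)⁻¹)) * Q := by
          rw [hQP, Matrix.mul_one]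
      _ = P * diagonal (fun m => μ m * (μ m)⁻¹) * Q := by
          rw [Matrix.diagonal_mul_diagonal]
      _ = 1 := by
          rw [show (fun m => μ m * (μ m)⁻¹) = fun _ => (1:ℝ) from
            funext fun m => mul_inv_cancel₀ (hμne m), Matrix.diagonal_one,
            Matrix.mul_one, hPQ]
  obtain ⟨a, ha⟩ : ∃ a : Fin N → ℝ, ∀ m, a m = (c m - 2*(d r)) * (μ m)⁻¹ := ⟨_, fun m => rfl⟩
  have hM : A * Ap⁻¹ = P * diagonal a * Q := by
    rw [hAdec, hApinv]
    calc (P * diagonal (fun m => c m - 2*(d r)) * Q) * (P * diagonal (fun m => (μ m)⁻¹) * Q)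
        = P * (diagonal (fun m => c m - 2*(d r)) * (Q * P) * diagonal (fun m => (μ m)⁻¹)) * Q := by
          noncomm_ring
      _ = P * (diagonal (fun m => c m - 2*(d r)) * diagonal (fun m => (μ m)⁻¹)) * Q := by
          rw [hQP, Matrix.mul_one]
      _ = P * diagonal a * Q := by
          rw [Matrix.diagonal_mul_diagonal,
            show (fun i => (c i - 2*(d r)) * (μ i)⁻¹) = a from funext fun m => (ha m).symm]
  obtain ⟨e, he⟩ : ∃ e : Fin N → ℝ, ∀ m, e m = (2*(d r) - 2*(d 1)) * (μ m)⁻¹ := ⟨_, fun m => rfl⟩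
  have hone : (1 : Matrix (Fin N) (Fin N) ℝ) - A * Ap⁻¹ = P * diagonal e * Q := by
    rw [hM]
    have h1 : (1 : Matrix (Fin N) (Fin N) ℝ) = P * diagonal (fun _ => (1:ℝ)) * Q := by
      rw [Matrix.diagonal_one, Matrix.mul_one, hPQ]
    have hea : (fun i => 1 - a i) = e := by
      funext m
      have hm := hμne m
      rw [hμ m] at hm
      rw [ha m, he m, hμ m]
      field_simp
      ring
    nth_rewrite 1 [h1]
    rw [← Matrix.sub_mul, ← Matrix.mul_sub, Matrix.diagonal_sub, hea]
  have haeval : (Polynomial.aeval (A * Ap⁻¹)) ((1 - Polynomial.X)^n : Polynomial ℝ)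
      = P * diagonal (fun m => (e m)^n) * Q := by
    rw [_root_.map_pow, _root_.map_sub, _root_.map_one, Polynomial.aeval_X, hone,
      conj_pow' P Q _ hPQ hQP, Matrix.diagonal_pow]
    congr 1
  -- bound on |e m|
  have hC0 : 0 ≤ C := by
    rw [hCdef]
    have hs : 0 ≤ ∑ l ∈ Finset.range (r - 1),
        k ^ (2 * l) / (4 ^ l * (Nat.factorial (2 * (l + 2))) : ℝ) := by
      apply Finset.sum_nonneg
      intro l _
      positivity
    have h2 : (0:ℝ) ≤ 2 * τ ^ 2 / δ₀ := by positivity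
    exact mul_nonneg h2 hs
  have hdiff : |d r - d 1| ≤ ∑ l ∈ Finset.range (r-1), τ^(2*(l+2))/(Nat.factorial (2*(l+2))) := by
    rw [hd r, hd 1, ← Finset.sum_Ico_eq_sub _ (by omega : 2 ≤ r+1)]
    refine le_trans (Finset.abs_sum_le_sum_abs _ _) ?_
    rw [Finset.sum_Ico_eq_sum_range, show r+1-2 = r-1 from by omega]
    apply le_of_eq
    apply Finset.sum_congr rfl
    intro l _
    have hpow : (0:ℝ) ≤ τ^(2*(2+l)) := by
      rw [pow_mul]
      positivity
    have hfac : (0:ℝ) < (Nat.factorial (2*(2+l)) : ℝ) := by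
      exact_mod_cast Nat.factorial_pos _
    rw [abs_div, abs_mul, abs_pow, abs_neg, abs_one, one_pow, one_mul,
      abs_of_nonneg hpow, abs_of_pos hfac, show 2+l = l+2 from by omega]
  have heC : ∀ m : Fin N, |e m| ≤ C := by
    intro m
    have hm := hμpos m
    have hden : (0:ℝ) < h^2*(k^2*δ₀) := by positivity
    have h1 : |e m| = 2*|d r - d 1| / |μ m| := by
      rw [he, abs_mul, abs_inv,
        show 2*(d r) - 2*(d 1) = 2*(d r - d 1) by ring, abs_mul, abs_two, div_eq_mul_inv]
    rw [h1]
    calc 2*|d r - d 1| / |μ m| ≤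
        2*(∑ l ∈ Finset.range (r-1), τ^(2*(l+2))/(Nat.factorial (2*(l+2)))) / (h^2*(k^2*δ₀)) := by
          have hnum : (0:ℝ) ≤ 2*(∑ l ∈ Finset.range (r-1), τ^(2*(l+2))/(Nat.factorial (2*(l+2)))) := by
            have := le_trans (abs_nonneg (d r - d 1)) hdiff
            linarith
          exact div_le_div₀ hnum (by linarith [hdiff]) hden (hμabs m)
      _ ≤ C := by
          rw [div_le_iff₀ hden]
          have hterm : ∀ l ∈ Finset.range (r-1),
              2*(τ^(2*(l+2))/(Nat.factorial (2*(l+2))))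
              ≤ 2 * τ ^ 2 / δ₀ * (k ^ (2 * l) / (4 ^ l * (Nat.factorial (2 * (l + 2))))) *
                  (h ^ 2 * (k ^ 2 * δ₀)) := by
            intro l _
            have hfac : (0:ℝ) < (Nat.factorial (2*(l+2)) : ℝ) := by
              exact_mod_cast Nat.factorial_pos _
            have hhl : h^(2*l) ≤ (1/4:ℝ)^l := by
              have h4 : h^2 ≤ (1/4:ℝ) := by nlinarith
              calc h^(2*l) = (h^2)^l := by rw [← pow_mul]
              _ ≤ (1/4:ℝ)^l := pow_le_pow_left₀ (sq_nonneg h) h4 l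
            calc 2*(τ^(2*(l+2))/(Nat.factorial (2*(l+2))))
                = (2*k^(2*l+4)*h^4/(Nat.factorial (2*(l+2)))) * h^(2*l) := by
                  rw [hτ]
                  ring
              _ ≤ (2*k^(2*l+4)*h^4/(Nat.factorial (2*(l+2)))) * (1/4:ℝ)^l := by
                  apply mul_le_mul_of_nonneg_left hhl
                  positivity
              _ = 2 * τ ^ 2 / δ₀ * (k ^ (2 * l) / (4 ^ l * (Nat.factorial (2 * (l + 2))))) *
                    (h ^ 2 * (k ^ 2 * δ₀)) := by
                  rw [hτ]
                  have h4l : (4:ℝ)^l ≠ 0 := by positivity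
                  rw [div_pow, one_pow]
                  field_simp
                  ring
          calc 2*(∑ l ∈ Finset.range (r-1), τ^(2*(l+2))/(Nat.factorial (2*(l+2))))
              = ∑ l ∈ Finset.range (r-1), 2*(τ^(2*(l+2))/(Nat.factorial (2*(l+2)))) := by
                rw [Finset.mul_sum]
            _ ≤ ∑ l ∈ Finset.range (r-1),
                2 * τ ^ 2 / δ₀ * (k ^ (2 * l) / (4 ^ l * (Nat.factorial (2 * (l + 2))))) *
                  (h ^ 2 * (k ^ 2 * δ₀)) := Finset.sum_le_sum hterm
            _ = C * (h ^ 2 * (k ^ 2 * δ₀)) := by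
                rw [hCdef, Finset.mul_sum, Finset.sum_mul]
  -- norms
  have hPPt : P * Pᵀ = (((N:ℝ)+1)/2) • (1 : Matrix (Fin N) (Fin N) ℝ) := by
    have h1 := hPQ
    rw [hQdef, Matrix.mul_smul] at h1
    calc P * Pᵀ = (((N:ℝ)+1)/2) • ((2/((N:ℝ)+1)) • (P * Pᵀ)) := by
          rw [smul_smul, show (((N:ℝ)+1)/2) * (2/((N:ℝ)+1)) = 1 by field_simp, one_smul]
      _ = (((N:ℝ)+1)/2) • (1 : Matrix (Fin N) (Fin N) ℝ) := by rw [h1]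
  have hQtQ : Qᵀ * Q = (2/((N:ℝ)+1)) • (1 : Matrix (Fin N) (Fin N) ℝ) := by
    rw [hQdef, Matrix.transpose_smul, Matrix.transpose_transpose, Matrix.smul_mul,
      Matrix.mul_smul, hPPt, smul_smul, smul_smul]
    congr 1
    field_simp
  set x : Fin N → ℝ := (WithLp.equiv 2 (Fin N → ℝ)) r₀ with hxdef
  refine ⟨(1 - Polynomial.X)^n, ?_, ?_, ?_⟩
  · refine le_trans (Polynomial.natDegree_pow_le) ?_
    have h1 : (1 - Polynomial.X : Polynomial ℝ).natDegree ≤ 1 :=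
      le_trans (Polynomial.natDegree_sub_le _ _) (by simp)
    calc n * (1 - Polynomial.X : Polynomial ℝ).natDegree ≤ n * 1 := Nat.mul_le_mul_left n h1
    _ = n := Nat.mul_one n
  · simp
  · rw [haeval]
    have hx : r₀ = (WithLp.equiv 2 (Fin N → ℝ)).symm x := by
      rw [hxdef]
      simp
    have hcl : ∀ (M : Matrix (Fin N) (Fin N) ℝ) (y : Fin N → ℝ),
        Matrix.toEuclideanCLM (𝕜 := ℝ) M ((WithLp.equiv 2 (Fin N → ℝ)).symm y)
          = (WithLp.equiv 2 (Fin N → ℝ)).symm (M.mulVec y) := fun M y => rfl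
    rw [hx, hcl,
      euclid_norm_symm, euclid_norm_symm]
    have hmv : (P * diagonal (fun m => (e m)^n) * Q).mulVec x
        = P.mulVec ((diagonal (fun m => (e m)^n)).mulVec (Q.mulVec x)) := by
      rw [Matrix.mulVec_mulVec, Matrix.mulVec_mulVec]
    rw [hmv]
    have hSdiag : ∑ i, (((diagonal (fun m => (e m)^n)).mulVec (Q.mulVec x)) i)^2
        ≤ (C^n)^2 * ∑ i, ((Q.mulVec x) i)^2 := by
      rw [Finset.mul_sum]
      apply Finset.sum_le_sum
      intro i _
      rw [Matrix.mulVec_diagonal]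
      have h1 : (e i)^2 ≤ C^2 := by
        rw [← sq_abs]
        exact pow_le_pow_left₀ (abs_nonneg _) (heC i) 2
      have h2 : ((e i)^2)^n ≤ (C^2)^n := pow_le_pow_left₀ (sq_nonneg _) h1 n
      have hexp : ∀ t : ℝ, (t^n)^2 = (t^2)^n := fun t => by
        rw [← pow_mul, ← pow_mul, Nat.mul_comm]
      calc ((e i)^n * (Q.mulVec x) i)^2 = ((e i)^n)^2 * ((Q.mulVec x) i)^2 := by ring
      _ = ((e i)^2)^n * ((Q.mulVec x) i)^2 := by rw [hexp]
      _ ≤ (C^2)^n * ((Q.mulVec x) i)^2 := by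
          apply mul_le_mul_of_nonneg_right h2 (sq_nonneg _)
      _ = (C^n)^2 * ((Q.mulVec x) i)^2 := by rw [hexp]
    have hchain : ∑ i, ((P.mulVec ((diagonal (fun m => (e m)^n)).mulVec (Q.mulVec x))) i)^2
        ≤ (C^n)^2 * ∑ i, (x i)^2 := by
      rw [sumsq_mulVec P _ hPtP]
      calc (((N:ℝ)+1)/2) * ∑ i, (((diagonal (fun m => (e m)^n)).mulVec (Q.mulVec x)) i)^2
          ≤ (((N:ℝ)+1)/2) * ((C^n)^2 * ∑ i, ((Q.mulVec x) i)^2) := by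
            apply mul_le_mul_of_nonneg_left hSdiag
            positivity
        _ = (C^n)^2 * ∑ i, (x i)^2 := by
            rw [sumsq_mulVec Q _ hQtQ]
            field_simp
    calc Real.sqrt (∑ i, ((P.mulVec ((diagonal (fun m => (e m)^n)).mulVec (Q.mulVec x))) i)^2)
        ≤ Real.sqrt ((C^n)^2 * ∑ i, (x i)^2) := Real.sqrt_le_sqrt hchain
      _ = C^n * Real.sqrt (∑ i, (x i)^2) := by
          rw [Real.sqrt_mul (sq_nonneg _), Real.sqrt_sq (pow_nonneg hC0 n)]
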